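/- arXiv:2307.00962 — 4 statements merged into one kernel-verified Lean document; each statement's English description precedes it below -/
import Mathlib

section
/- Under assumption (A-1), the spectrum of the quantum walk U = SC equals the unit circle {z ∈ ℂ : |z| = 1}, and every eigenvalue of U lies on the unit circle and has a finite-dimensional eigenspace. -/
noncomputable section

namespace QWPaper

open Complex

/-- Sites of the two-dimensional lattice. -/
abbrev Site : Type := ℤ × ℤ

/-- Chirality indices: `0 = ←`, `1 = →`, `2 = ↓`, `3 = ↑`. -/
abbrev Chir : Type := Fin 4

abbrev V : Type := EuclideanSpace ℂ (Fin 4)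

/-- The Hilbert space `H = ℓ²(ℤ²; ℂ⁴)`. -/
abbrev H : Type := lp (fun _ : Site => V) 2

/-- The inner domain `Ω^i = {x : |x₁| ≤ M₀, |x₂| ≤ M₀}`. -/
def innerDom (M₀ : ℤ) : Set Site := {x | |x.1| ≤ M₀ ∧ |x.2| ≤ M₀}

/-- `S` is the shift operator:
`(Su)(x) = (u_←(x+e₁), u_→(x−e₁), u_↓(x+e₂), u_↑(x−e₂))`. -/
def IsShiftOp (S : H →L[ℂ] H) : Prop :=
  ∀ (u : H) (x : Site),
    (S u) x 0 = u (x.1 + 1, x.2) 0 ∧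
    (S u) x 1 = u (x.1 - 1, x.2) 1 ∧
    (S u) x 2 = u (x.1, x.2 + 1) 2 ∧
    (S u) x 3 = u (x.1, x.2 - 1) 3

/-- `A` is the bounded operator of pointwise multiplication by the matrix family `C`. -/
def IsCoinOp (A : H →L[ℂ] H) (C : Site → Matrix Chir Chir ℂ) : Prop :=
  ∀ (u : H) (x : Site) (i : Chir), (A u) x i = ∑ j : Chir, C x i j * u x j

/-- Every coin matrix is unitary. -/
def IsUnitaryCoin (C : Site → Matrix Chir Chir ℂ) : Prop :=
  ∀ x, C x ∈ Matrix.unitaryGroup Chir ℂ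

/-- Assumption (A-1): `C(x) = I₄` off `Ω^i`, with `M₀ ≥ 1`. -/
def SatisfiesA1 (C : Site → Matrix Chir Chir ℂ) (M₀ : ℤ) : Prop :=
  1 ≤ M₀ ∧ ∀ x, x ∉ innerDom M₀ → C x = 1

/-- `D_x(θ) = diag(e^{iθx₁}, e^{−iθx₁}, e^{iθx₂}, e^{−iθx₂})`. -/
def Dmat (θ : ℂ) (x : Site) : Matrix Chir Chir ℂ :=
  Matrix.diagonal ![Complex.exp (Complex.I * θ * x.1), Complex.exp (-(Complex.I * θ * x.1)),
    Complex.exp (Complex.I * θ * x.2), Complex.exp (-(Complex.I * θ * x.2))]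

/-- The translated coin `D_x(θ) C(x) D_x(θ)⁻¹`. -/
def transCoin (θ : ℂ) (C : Site → Matrix Chir Chir ℂ) (x : Site) : Matrix Chir Chir ℂ :=
  Dmat θ x * C x * (Dmat θ x)⁻¹

/-- The complex translated walk `U(θ) = e^{−iθ} S M(θ)`. -/
def transWalkOp (θ : ℂ) (S Mθ : H →L[ℂ] H) : H →L[ℂ] H :=
  Complex.exp (-(Complex.I * θ)) • (S.comp Mθ)

/-- `⟨x⟩ = (1 + |x|²)^{1/2}`. -/
def jnorm (x : Site) : ℝ := Real.sqrt (1 + ((x.1 : ℝ) ^ 2 + (x.2 : ℝ) ^ 2))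

/-- Super-exponentially decreasing elements of `H`: `e^{τ⟨x⟩} f ∈ H` for every `τ > 0`. -/
def SuperExpDecay (f : H) : Prop :=
  ∀ τ : ℝ, 0 < τ → Memℓp (fun x : Site => (Real.exp (τ * jnorm x) • f x : V)) 2

/-- Pointwise shift of an arbitrary `ℂ⁴`-valued map on `ℤ²`. -/
def ptShift (v : Site → Chir → ℂ) (x : Site) : Chir → ℂ :=
  ![v (x.1 + 1, x.2) 0, v (x.1 - 1, x.2) 1, v (x.1, x.2 + 1) 2, v (x.1, x.2 - 1) 3]

/-- Pointwise coin action on an arbitrary `ℂ⁴`-valued map on `ℤ²`. -/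
def ptCoin (C : Site → Matrix Chir Chir ℂ) (u : Site → Chir → ℂ) (x : Site) (i : Chir) : ℂ :=
  ∑ j : Chir, C x i j * u x j

/-- Pointwise action of the walk `U = SC` on arbitrary `ℂ⁴`-valued maps. -/
def ptWalk (C : Site → Matrix Chir Chir ℂ) (u : Site → Chir → ℂ) : Site → Chir → ℂ :=
  ptShift (ptCoin C u)

/-- `u` is a pointwise solution of `U u = e^{−iκ} u`. -/
def IsPtSolution (C : Site → Matrix Chir Chir ℂ) (κ : ℂ) (u : Site → Chir → ℂ) : Prop :=
  ∀ (x : Site) (i : Chir), ptWalk C u x i = Complex.exp (-(Complex.I * κ)) * u x i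

/-- `u` is outgoing with the explicit sequences `aL aR aD aU`. -/
def IsOutgoingWith (M₀ : ℤ) (κ : ℂ) (aL aR aD aU : ℤ → ℂ) (u : Site → Chir → ℂ) : Prop :=
  (∀ x : Site, x.1 < -M₀ → u x 0 = aL x.2 * Complex.exp (-(Complex.I * κ * x.1))) ∧
  (∀ x : Site, M₀ < x.1 → u x 0 = 0) ∧
  (∀ x : Site, x.1 < -M₀ → u x 1 = 0) ∧
  (∀ x : Site, M₀ < x.1 → u x 1 = aR x.2 * Complex.exp (Complex.I * κ * x.1)) ∧
  (∀ x : Site, x.2 < -M₀ → u x 2 = aD x.1 * Complex.exp (-(Complex.I * κ * x.2))) ∧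
  (∀ x : Site, M₀ < x.2 → u x 2 = 0) ∧
  (∀ x : Site, x.2 < -M₀ → u x 3 = 0) ∧
  (∀ x : Site, M₀ < x.2 → u x 3 = aU x.1 * Complex.exp (Complex.I * κ * x.2))

/-- `u` is an outgoing map. -/
def IsOutgoing (M₀ : ℤ) (κ : ℂ) (u : Site → Chir → ℂ) : Prop :=
  ∃ aL aR aD aU : ℤ → ℂ, IsOutgoingWith M₀ κ aL aR aD aU u

/-- Elastic coin: column `j` of `C_el(x)` is `e^{iα_j(x)} 𝐞_{σ(x)(j)}`. -/
def elasticCoin (σ : Site → Equiv.Perm Chir) (α : Site → Chir → ℝ) (x : Site) :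
    Matrix Chir Chir ℂ :=
  Matrix.of fun i j => if i = σ x j then Complex.exp (Complex.I * (α x j : ℂ)) else 0

/-- The initial state `δ_y 𝐞_j ∈ H`. -/
def deltaState (y : Site) (j : Chir) : H := lp.single 2 y (EuclideanSpace.single j 1)

/-- `(q, p)` is the trajectory map of the elastic walk `Uel`:
`Uel^t (δ_y 𝐞_j)` is a modulus-one multiple of `δ_{q(t,y,j)} 𝐞_{p(t,y,j)}`. -/
def IsTrajectory (Uel : unitary (H →L[ℂ] H))
    (q : ℤ → Site → Chir → Site) (p : ℤ → Site → Chir → Chir) : Prop :=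
  (∀ y j, q 0 y j = y ∧ p 0 y j = j) ∧
  ∀ (t : ℤ) (y : Site) (j : Chir), ∃ c : ℂ, ‖c‖ = 1 ∧
    ((Uel ^ t : unitary (H →L[ℂ] H)) : H →L[ℂ] H) (deltaState y j)
      = c • deltaState (q t y j) (p t y j)

/-- Euclidean norm of a lattice point. -/
def znorm (x : Site) : ℝ := Real.sqrt ((x.1 : ℝ) ^ 2 + (x.2 : ℝ) ^ 2)

/-- The parts of the barrier `K`. -/
def K1p (M₀ : ℤ) : Set Site := {x | x.1 = M₀ ∧ |x.2| ≤ M₀}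
def K1m (M₀ : ℤ) : Set Site := {x | x.1 = -M₀ ∧ |x.2| ≤ M₀}
def K2p (M₀ : ℤ) : Set Site := {x | x.2 = M₀ ∧ |x.1| ≤ M₀}
def K2m (M₀ : ℤ) : Set Site := {x | x.2 = -M₀ ∧ |x.1| ≤ M₀}
def Kbar (M₀ : ℤ) : Set Site := K1p M₀ ∪ K1m M₀ ∪ K2p M₀ ∪ K2m M₀

/-- The exterior domain `Ω^e = (ℤ² \ Ω^i) ∪ K`. -/
def outerDom (M₀ : ℤ) : Set Site := {x | x ∉ innerDom M₀} ∪ Kbar M₀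

/-- Membership in the interior space `H_i`. -/
def memHi (M₀ : ℤ) (u : H) : Prop :=
  (∀ x, x ∉ innerDom M₀ → ∀ i : Chir, u x i = 0) ∧
  (∀ x ∈ K1p M₀, u x 0 = 0) ∧ (∀ x ∈ K1m M₀, u x 1 = 0) ∧
  (∀ x ∈ K2p M₀, u x 2 = 0) ∧ (∀ x ∈ K2m M₀, u x 3 = 0)

/-- Membership in the exterior space `H_e`. -/
def memHe (M₀ : ℤ) (u : H) : Prop :=
  (∀ x, x ∉ outerDom M₀ → ∀ i : Chir, u x i = 0) ∧
  (∀ x ∈ K1m M₀ ∪ K2p M₀ ∪ K2m M₀, u x 0 = 0) ∧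
  (∀ x ∈ K1p M₀ ∪ K2p M₀ ∪ K2m M₀, u x 1 = 0) ∧
  (∀ x ∈ K2m M₀ ∪ K1p M₀ ∪ K1m M₀, u x 2 = 0) ∧
  (∀ x ∈ K2p M₀ ∪ K1p M₀ ∪ K1m M₀, u x 3 = 0)

/-- The non-penetrable barrier conditions for `U_np`. -/
def IsBarrierWalk (M₀ : ℤ) (Unp : H →L[ℂ] H) : Prop :=
  ∀ u : H,
    (∀ x ∈ K1p M₀, (Unp u) (x.1 + 1, x.2) 1 = u x 0) ∧
    (∀ x ∈ K1m M₀, (Unp u) (x.1 - 1, x.2) 0 = u x 0) ∧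
    (∀ x ∈ K2p M₀, (Unp u) (x.1, x.2 + 1) 3 = u x 2) ∧
    (∀ x ∈ K2m M₀, (Unp u) (x.1, x.2 - 1) 2 = u x 3)

/-- The rectangular loop `L_{ε,s}(μ)` (boundary of the rectangle with half-widths `a`, `b`). -/
def loopSet (μ a b : ℝ) : Set ℂ :=
  {κ | |κ.re - μ| ≤ a ∧ |κ.im| ≤ b ∧ (|κ.re - μ| = a ∨ |κ.im| = b)}

/-- The four-corner elastic coin. -/
def fourCornerCoin (m₀ n₀ : ℤ) (x : Site) : Matrix Chir Chir ℂ :=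
  if x = ((0 : ℤ), (0 : ℤ)) then !![0,1,0,0; 0,0,1,0; 0,0,0,1; 1,0,0,0]
  else if x = (m₀, (0 : ℤ)) then !![0,0,1,0; 1,0,0,0; 0,0,0,1; 0,1,0,0]
  else if x = (m₀, n₀) then !![0,0,0,1; 1,0,0,0; 0,1,0,0; 0,0,1,0]
  else if x = ((0 : ℤ), n₀) then !![0,1,0,0; 0,0,0,1; 1,0,0,0; 0,0,1,0]
  else 1

/-- The four corners. -/
def corners (m₀ n₀ : ℤ) : Set Site :=
  {((0 : ℤ), (0 : ℤ)), (m₀, (0 : ℤ)), (m₀, n₀), ((0 : ℤ), n₀)}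

/-- A perturbed four-corner coin `C_ε`. -/
def IsPerturbedFourCorner (m₀ n₀ : ℤ) (ε : ℝ) (Cε : Site → Matrix Chir Chir ℂ) : Prop :=
  IsUnitaryCoin Cε ∧
  (∀ x, x ∉ corners m₀ n₀ → Cε x = 1) ∧
  (∀ x ∈ corners m₀ n₀, ∀ i j : Chir, ‖Cε x i j - fourCornerCoin m₀ n₀ x i j‖ < ε) ∧
  Cε ((0 : ℤ), (0 : ℤ)) 1 0 = 0 ∧ Cε ((0 : ℤ), (0 : ℤ)) 3 2 = 0 ∧
  Cε (m₀, (0 : ℤ)) 3 2 = 0 ∧ Cε (m₀, (0 : ℤ)) 0 1 = 0 ∧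
  Cε (m₀, n₀) 2 3 = 0 ∧ Cε (m₀, n₀) 0 1 = 0 ∧
  Cε ((0 : ℤ), n₀) 1 0 = 0 ∧ Cε ((0 : ℤ), n₀) 2 3 = 0

/-- `c_ε⁺ = c_{↑,←}(0,0) c_{←,↓}(m₀,0) c_{↓,→}(m₀,n₀) c_{→,↑}(0,n₀)`. -/
def cPlus (m₀ n₀ : ℤ) (Cε : Site → Matrix Chir Chir ℂ) : ℂ :=
  Cε ((0 : ℤ), (0 : ℤ)) 3 0 * Cε (m₀, (0 : ℤ)) 0 2 * Cε (m₀, n₀) 2 1 * Cε ((0 : ℤ), n₀) 1 3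

/-- `c_ε⁻ = c_{→,↓}(0,0) c_{↑,→}(m₀,0) c_{←,↑}(m₀,n₀) c_{↓,←}(0,n₀)`. -/
def cMinus (m₀ n₀ : ℤ) (Cε : Site → Matrix Chir Chir ℂ) : ℂ :=
  Cε ((0 : ℤ), (0 : ℤ)) 1 2 * Cε (m₀, (0 : ℤ)) 3 1 * Cε (m₀, n₀) 0 3 * Cε ((0 : ℤ), n₀) 2 0

/-- `u ∈ H` is supported on the set `A ⊆ ℤ² × {←,→,↓,↑}`. -/
def SupportedOn (u : H) (A : Set (Site × Chir)) : Prop :=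
  ∀ (x : Site) (i : Chir), (x, i) ∉ A → u x i = 0

/-- The image of the closed trajectory `Φ₊` of the four-corner walk. -/
def imPhiPlus (m₀ n₀ : ℤ) : Set (Site × Chir) :=
  {w | ∃ t : ℤ, 1 ≤ t ∧ t ≤ n₀ ∧ w = (((0 : ℤ), t), (3 : Chir))} ∪
  {w | ∃ t : ℤ, 1 ≤ t ∧ t ≤ m₀ ∧ w = ((t, n₀), (1 : Chir))} ∪
  {w | ∃ t : ℤ, 0 ≤ t ∧ t ≤ n₀ - 1 ∧ w = ((m₀, t), (2 : Chir))} ∪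
  {w | ∃ t : ℤ, 0 ≤ t ∧ t ≤ m₀ - 1 ∧ w = ((t, (0 : ℤ)), (0 : Chir))}

/-- The image of the reversed closed trajectory `Φ₋` of the four-corner walk. -/
def imPhiMinus (m₀ n₀ : ℤ) : Set (Site × Chir) :=
  {w | ∃ t : ℤ, 1 ≤ t ∧ t ≤ m₀ ∧ w = ((t, (0 : ℤ)), (1 : Chir))} ∪
  {w | ∃ t : ℤ, 1 ≤ t ∧ t ≤ n₀ ∧ w = ((m₀, t), (3 : Chir))} ∪
  {w | ∃ t : ℤ, 0 ≤ t ∧ t ≤ m₀ - 1 ∧ w = ((t, n₀), (0 : Chir))} ∪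
  {w | ∃ t : ℤ, 0 ≤ t ∧ t ≤ n₀ - 1 ∧ w = (((0 : ℤ), t), (2 : Chir))}

/-- The eight outgoing tails starting from the four corners. -/
def tails (m₀ n₀ : ℤ) : Set (Site × Chir) :=
  {w | ∃ N y₂ : ℤ, 1 ≤ N ∧ (y₂ = 0 ∨ y₂ = n₀) ∧ w = ((-N, y₂), (0 : Chir))} ∪
  {w | ∃ N y₁ : ℤ, 1 ≤ N ∧ (y₁ = 0 ∨ y₁ = m₀) ∧ w = ((y₁, n₀ + N), (3 : Chir))} ∪
  {w | ∃ N y₁ : ℤ, 1 ≤ N ∧ (y₁ = 0 ∨ y₁ = m₀) ∧ w = ((y₁, -N), (2 : Chir))} ∪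
  {w | ∃ N y₂ : ℤ, 1 ≤ N ∧ (y₂ = 0 ∨ y₂ = n₀) ∧ w = ((m₀ + N, y₂), (1 : Chir))}

/-- The shape resonance perturbation `C_ε` of the barrier coin `C_np`. -/
def IsShapePerturbation (M₀ : ℤ) (Cnp : Site → Matrix Chir Chir ℂ) (ε : ℝ)
    (Cε : Site → Matrix Chir Chir ℂ) : Prop :=
  IsUnitaryCoin Cε ∧ (∀ x, x ∉ Kbar M₀ → Cε x = Cnp x) ∧
  (∀ x ∈ Kbar M₀, ∀ i j : Chir, ‖Cε x i j - Cnp x i j‖ < ε)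

/-- Counterclockwise contour integral of an operator-valued map over the boundary of the
rectangle centered at `μ ∈ ℝ` with half-widths `a` and `b`. -/
def rectIntegral (f : ℂ → (H →L[ℂ] H)) (μ a b : ℝ) : H →L[ℂ] H :=
  ((∫ t in (μ - a)..(μ + a), f (t - b * Complex.I)) -
      (∫ t in (μ - a)..(μ + a), f (t + b * Complex.I))) +
  Complex.I • ((∫ s in (-b)..b, f ((μ + a : ℝ) + s * Complex.I)) -
      (∫ s in (-b)..b, f ((μ - a : ℝ) + s * Complex.I)))

/-- The Riesz-type projection `(1/2π) ∮ e^{−iκ} (A − e^{−iκ})^{−1} dκ` over the rectangular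
loop of half-widths `a`, `b` around `μ`. -/
def rieszProj (A : H →L[ℂ] H) (μ a b : ℝ) : H →L[ℂ] H :=
  (1 / (2 * Real.pi)) •
    rectIntegral (fun κ => Complex.exp (-(Complex.I * κ)) •
      Ring.inverse (A - Complex.exp (-(Complex.I * κ)) • (1 : H →L[ℂ] H))) μ a b

end QWPaper

/-! Unitarity puts the spectrum of `U` on the unit circle. Conversely, on the row `x₂ = M₀ + 1`
the coin is trivial and `U` maps `δ_{(k, M₀+1)} 𝐞_→` to `δ_{(k+1, M₀+1)} 𝐞_→`; an operator that
moves an orthonormal sequence `e_k` forward has the approximate eigenvectors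
`∑_{k<n} w⁻ᵏ e_k`, of norm `√n` and defect at most `2`, for every `|w| = 1`.
Outside `Ω^i` the eigenvalue equation `U u = z u` transports each chirality component along an
axis-parallel line with a factor of modulus one, so square-summability forces `u = 0` off `Ω^i`
and the eigenspace embeds into the finite-dimensional space of `ℂ⁴`-valued functions on `Ω^i`. -/

open Filter Topology

theorem lp.tendsto_norm_cofinite_zero {α : Type*} {E : α → Type*}
    [∀ a, NormedAddCommGroup (E a)] {p : ENNReal} (hp : 0 < p.toReal) (u : lp E p) :
    Tendsto (fun a => ‖u a‖) cofinite (𝓝 0) := by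
  have hpow := ((lp.memℓp u).summable hp).tendsto_cofinite_zero
  have hroot := ((Real.continuousAt_rpow_const 0 p.toReal⁻¹
    (Or.inr (inv_pos.2 hp).le)).tendsto).comp hpow
  rw [Real.zero_rpow (inv_ne_zero hp.ne')] at hroot
  refine hroot.congr fun a => ?_
  exact Real.rpow_rpow_inv (norm_nonneg _) hp.ne'

theorem eq_zero_of_norm_succ_eq_of_tendsto_cofinite {α F : Type*} [NormedAddCommGroup F]
    {f : α → F} (hf : Tendsto (fun a => ‖f a‖) cofinite (𝓝 0)) {g : ℕ → α}
    (hg : Function.Injective g) (hstep : ∀ k, ‖f (g (k + 1))‖ = ‖f (g k)‖) : f (g 0) = 0 := by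
  have hconst : ∀ k, ‖f (g k)‖ = ‖f (g 0)‖ := by
    intro k
    induction k with
    | zero => rfl
    | succ k ih => rw [hstep, ih]
  have hlim : Tendsto (fun k => ‖f (g k)‖) atTop (𝓝 0) := by
    rw [← Nat.cofinite_eq_atTop]
    exact hf.comp hg.tendsto_cofinite
  simp only [hconst, tendsto_const_nhds_iff] at hlim
  exact norm_eq_zero.mp hlim

theorem spectrum.mem_of_forall_exists_lt_norm {𝕜 E : Type*} [NontriviallyNormedField 𝕜]
    [NormedAddCommGroup E] [NormedSpace 𝕜 E] {T : E →L[𝕜] E} {w : 𝕜} {c : ℝ}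
    (h : ∀ R : ℝ, ∃ v : E, R < ‖v‖ ∧ ‖T v - w • v‖ ≤ c) : w ∈ spectrum 𝕜 T := by
  by_contra hw
  obtain ⟨t, ht⟩ := spectrum.notMem_iff.mp hw
  obtain ⟨v, hv, hTv⟩ := h (‖(↑t⁻¹ : E →L[𝕜] E)‖ * c)
  have hinv : v = (↑t⁻¹ : E →L[𝕜] E) (w • v - T v) := by
    have hv : (↑t⁻¹ : E →L[𝕜] E) ((t : E →L[𝕜] E) v) = v := by
      rw [← mul_apply_eq_comp, Units.inv_mul, one_apply_eq_self]
    rw [ht] at hv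
    simpa [Algebra.algebraMap_eq_smul_one] using hv.symm
  have hle : ‖v‖ ≤ ‖(↑t⁻¹ : E →L[𝕜] E)‖ * c := by
    calc ‖v‖ ≤ ‖(↑t⁻¹ : E →L[𝕜] E)‖ * ‖w • v - T v‖ := by
          conv_lhs => rw [hinv]
          exact ContinuousLinearMap.le_opNorm _ _
      _ ≤ ‖(↑t⁻¹ : E →L[𝕜] E)‖ * c := by
          gcongr
          rwa [norm_sub_rev]
  exact hle.not_gt hv

theorem mem_spectrum_of_orthonormal_of_apply_eq_succ {𝕜 E : Type*} [RCLike 𝕜]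
    [NormedAddCommGroup E] [InnerProductSpace 𝕜 E] {T : E →L[𝕜] E} {e : ℕ → E}
    (he : Orthonormal 𝕜 e) (hT : ∀ k, T (e k) = e (k + 1)) {w : 𝕜} (hw : ‖w‖ = 1) :
    w ∈ spectrum 𝕜 T := by
  set f : ℕ → E := fun k => w⁻¹ ^ k • e k
  have hf : ∀ k, ‖f k‖ = 1 := fun k => by simp [f, norm_smul, he.norm_eq_one, hw]
  have hTf : ∀ k, T (f k) = w • f (k + 1) := fun k => by
    have hw0 : w ≠ 0 := by rintro rfl; simp at hw
    rw [map_smul, hT, smul_smul, pow_succ]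
    congr 1
    field_simp
  refine spectrum.mem_of_forall_exists_lt_norm (c := 2) fun R => ?_
  refine ⟨∑ k ∈ Finset.range (⌈R ^ 2⌉₊ + 1), f k, ?_, ?_⟩
  · have hnorm : ‖∑ k ∈ Finset.range (⌈R ^ 2⌉₊ + 1), f k‖ ^ 2 = ⌈R ^ 2⌉₊ + 1 := by
      have := he.inner_sum (fun k => w⁻¹ ^ k) (fun k => w⁻¹ ^ k) (Finset.range (⌈R ^ 2⌉₊ + 1))
      simp only [RCLike.conj_mul, norm_pow, norm_inv, hw, inv_one, one_pow] at this
      rw [inner_self_eq_norm_sq_to_K] at this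
      simp only [RCLike.ofReal_one, one_pow, Finset.sum_const, Finset.card_range,
        nsmul_eq_mul, mul_one] at this
      exact_mod_cast this
    refine (le_abs_self R).trans_lt (abs_lt_of_sq_lt_sq ?_ (norm_nonneg _))
    rw [hnorm]
    exact (Nat.le_ceil _).trans_lt (by norm_cast; omega)
  · rw [map_sum]
    simp only [hTf]
    rw [← Finset.smul_sum, ← smul_sub, ← Finset.sum_sub_distrib, Finset.sum_range_sub f,
      norm_smul, hw, one_mul]
    calc _ ≤ ‖f _‖ + ‖f 0‖ := norm_sub_le _ _
      _ = 2 := by rw [hf, hf]; norm_num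

theorem lp.finiteDimensional_of_forall_apply_eq_zero {𝕜 α : Type*} {E : α → Type*}
    [NormedField 𝕜] [∀ a, NormedAddCommGroup (E a)] [∀ a, NormedSpace 𝕜 (E a)]
    [∀ a, FiniteDimensional 𝕜 (E a)] {p : ENNReal} [Fact (1 ≤ p)] (W : Submodule 𝕜 (lp E p))
    {s : Set α} (hs : s.Finite) (hW : ∀ v ∈ W, ∀ a ∉ s, v a = 0) : FiniteDimensional 𝕜 W := by
  have := hs.fintype
  let Φ : W →ₗ[𝕜] ∀ a : s, E a := LinearMap.pi fun a => (lp.evalₗ E p a.1).comp W.subtype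
  refine FiniteDimensional.of_injective Φ fun v v' hvv' => Subtype.ext (lp.ext (funext fun a => ?_))
  by_cases ha : a ∈ s
  · exact congrFun hvv' ⟨a, ha⟩
  · rw [hW v v.2 a ha, hW v' v'.2 a ha]

namespace QWPaper

variable {M₀ : ℤ} {C : Site → Matrix Chir Chir ℂ} {S Cop : H →L[ℂ] H}

def shiftDir : Chir → Site := ![(1, 0), (-1, 0), (0, 1), (0, -1)]

lemma shiftDir_ne_zero (i : Chir) : shiftDir i ≠ 0 := by
  fin_cases i <;> simp [shiftDir]

lemma IsShiftOp.apply_eq (hS : IsShiftOp S) (u : H) (x : Site) (i : Chir) :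
    S u x i = u (x + shiftDir i) i := by
  obtain ⟨h0, h1, h2, h3⟩ := hS u x
  obtain ⟨x₁, x₂⟩ := x
  fin_cases i <;> simp [shiftDir, h0, h1, h2, h3, sub_eq_add_neg]

lemma IsCoinOp.apply_eq_of_eq_one (hCop : IsCoinOp Cop C) {x : Site} (hx : C x = 1) (u : H) :
    Cop u x = u x := by
  ext i
  simp [hCop u x i, hx, Matrix.one_apply]

lemma IsCoinOp.apply_deltaState (hCop : IsCoinOp Cop C) {y : Site} (hy : C y = 1) (j : Chir) :
    Cop (deltaState y j) = deltaState y j := by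
  refine lp.ext (funext fun x => ?_)
  by_cases hx : x = y
  · subst hx
    exact hCop.apply_eq_of_eq_one hy _
  · ext i
    simp [hCop _ x i, deltaState, Pi.single_eq_of_ne hx]

lemma IsShiftOp.apply_deltaState (hS : IsShiftOp S) (y : Site) (j : Chir) :
    S (deltaState y j) = deltaState (y - shiftDir j) j := by
  refine lp.ext (funext fun x => ?_)
  ext i
  rw [hS.apply_eq]
  by_cases hij : i = j
  · subst hij
    simp [deltaState, lp.single_apply, Pi.single_apply, eq_sub_iff_add_eq]
  · simp only [deltaState, lp.single_apply, Pi.single_apply]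
    split_ifs <;> simp [hij]

lemma orthonormal_deltaState {ι : Type*} {g : ι → Site} (hg : Function.Injective g) (j : Chir) :
    Orthonormal ℂ fun k => deltaState (g k) j := by
  classical
  rw [orthonormal_iff_ite]
  intro a b
  by_cases hab : a = b
  · subst hab
    simp [deltaState]
  · simp [deltaState, lp.inner_single_left, lp.single_apply, hab, hg.ne hab]

lemma innerDom_finite (M₀ : ℤ) : (innerDom M₀).Finite :=
  ((Set.finite_Icc (-M₀) M₀).prod (Set.finite_Icc (-M₀) M₀)).subset
    fun _ hx => ⟨abs_le.mp hx.1, abs_le.mp hx.2⟩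

/-- `Ω^i` is a box, so an axis-parallel line through a point outside it meets it on one side only. -/
lemma forall_add_smul_shiftDir_notMem_or_forall_sub {x : Site} (hx : x ∉ innerDom M₀)
    (i : Chir) :
    (∀ k : ℕ, x + (k : ℤ) • shiftDir i ∉ innerDom M₀) ∨
      ∀ k : ℕ, x - (k : ℤ) • shiftDir i ∉ innerDom M₀ := by
  by_contra! h
  obtain ⟨⟨a, ha⟩, ⟨b, hb⟩⟩ := h
  apply hx
  obtain ⟨x₁, x₂⟩ := x
  fin_cases i <;> simp [innerDom, shiftDir, abs_le] at ha hb ⊢ <;> omega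

section Walk

variable (hA1 : SatisfiesA1 C M₀) (hS : IsShiftOp S) (hCop : IsCoinOp Cop C)
include hA1 hS hCop

lemma apply_add_shiftDir_of_walk_eq_smul {z : ℂ} {u : H} (hu : S.comp Cop u = z • u) {y : Site}
    {i : Chir} (hy : y + shiftDir i ∉ innerDom M₀) : u (y + shiftDir i) i = z * u y i := by
  have h := congrArg (fun v : H => v y i) hu
  simpa [hS.apply_eq, hCop.apply_eq_of_eq_one (hA1.2 _ hy)] using h

lemma walk_apply_deltaState {y : Site} (hy : y ∉ innerDom M₀) (j : Chir) :
    S.comp Cop (deltaState y j) = deltaState (y - shiftDir j) j := by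
  rw [ContinuousLinearMap.comp_apply, hCop.apply_deltaState (hA1.2 y hy), hS.apply_deltaState]

lemma apply_eq_zero_of_walk_eq_smul {z : ℂ} (hz : ‖z‖ = 1) {u : H} (hu : S.comp Cop u = z • u)
    {x : Site} (hx : x ∉ innerDom M₀) : u x = 0 := by
  ext i
  set line : ℤ → Site := fun t => x + t • shiftDir i
  have hline : Function.Injective line :=
    (add_right_injective x).comp (smul_left_injective ℤ (shiftDir_ne_zero i))
  have hstep : ∀ t, line (t + 1) ∉ innerDom M₀ → ‖u (line (t + 1)) i‖ = ‖u (line t) i‖ := by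
    intro t ht
    have hsucc : line (t + 1) = line t + shiftDir i := by
      simp only [line]
      rw [add_smul, one_smul, add_assoc]
    rw [hsucc] at ht ⊢
    rw [apply_add_shiftDir_of_walk_eq_smul hA1 hS hCop hu ht, norm_mul, hz, one_mul]
  have hdecay : Tendsto (fun y => ‖u y i‖) cofinite (𝓝 0) :=
    squeeze_zero (fun _ => norm_nonneg _) (fun y => PiLp.norm_apply_le (u y) i)
      (lp.tendsto_norm_cofinite_zero (by norm_num) u)
  rcases forall_add_smul_shiftDir_notMem_or_forall_sub hx i with hfwd | hbwd
  · have := eq_zero_of_norm_succ_eq_of_tendsto_cofinite hdecay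
      (hline.comp Nat.cast_injective) fun k => hstep k (by simpa [line] using hfwd (k + 1))
    simpa [line] using this
  · have hback : ∀ k : ℕ, ‖u (line (-(k + 1 : ℕ))) i‖ = ‖u (line (-k)) i‖ := fun k => by
      have hk : -((k + 1 : ℕ) : ℤ) + 1 = -k := by push_cast; ring
      rw [← hk]
      exact (hstep _ (by rw [hk]; simpa [line, sub_eq_add_neg] using hbwd k)).symm
    have := eq_zero_of_norm_succ_eq_of_tendsto_cofinite hdecay
      (g := line ∘ Neg.neg ∘ Nat.cast) (hline.comp (neg_injective.comp Nat.cast_injective)) hback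
    simpa [line] using this

lemma mem_spectrum_walk_of_norm_eq_one {w : ℂ} (hw : ‖w‖ = 1) : w ∈ spectrum ℂ (S.comp Cop) := by
  refine mem_spectrum_of_orthonormal_of_apply_eq_succ
    (orthonormal_deltaState (g := fun k : ℕ => ((k : ℤ), M₀ + 1)) ?_ 1) (fun k => ?_) hw
  · intro a b hab
    simpa using hab
  · have hout : ((k : ℤ), M₀ + 1) ∉ innerDom M₀ := fun h => by
      have := (abs_le.mp h.2).2
      omega
    rw [walk_apply_deltaState hA1 hS hCop hout]
    congr 1
    simp [shiftDir]

end Walk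

theorem perturbed_walk_spectrum_general
    (M₀ : ℤ) (C : Site → Matrix Chir Chir ℂ)
    (hA1 : SatisfiesA1 C M₀)
    (S Cop : H →L[ℂ] H) (hS : IsShiftOp S) (hCop : IsCoinOp Cop C)
    (hUnit : S.comp Cop ∈ unitary (H →L[ℂ] H)) :
    spectrum ℂ (S.comp Cop) = {z : ℂ | ‖z‖ = 1} ∧
    ∀ z : ℂ, (∃ u : H, u ≠ 0 ∧ (S.comp Cop) u = z • u) →
      ‖z‖ = 1 ∧
      FiniteDimensional ℂ (Module.End.eigenspace (↑(S.comp Cop) : H →ₗ[ℂ] H) z) := by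
  have hcircle : spectrum ℂ (S.comp Cop) ⊆ {z : ℂ | ‖z‖ = 1} := fun w hw => by
    simpa using spectrum.subset_circle_of_unitary hUnit hw
  refine ⟨hcircle.antisymm fun w hw => mem_spectrum_walk_of_norm_eq_one hA1 hS hCop hw,
    fun z ⟨u, hu0, hu⟩ => ?_⟩
  have hz : ‖z‖ = 1 := by
    have h := ContinuousLinearMap.norm_map_of_mem_unitary hUnit u
    rw [hu, norm_smul] at h
    simpa [hu0] using h
  refine ⟨hz, lp.finiteDimensional_of_forall_apply_eq_zero _ (innerDom_finite M₀) ?_⟩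
  intro v hv x hx
  exact apply_eq_zero_of_walk_eq_smul hA1 hS hCop hz (Module.End.mem_eigenspace_iff.mp hv) hx

/-- Under (A-1), the spectrum of `U = SC` equals the unit circle, and every
eigenvalue of `U` lies on the unit circle and has finite-dimensional eigenspace. -/
theorem perturbed_walk_spectrum
    (M₀ : ℤ) (C : Site → Matrix Chir Chir ℂ)
    (hC : IsUnitaryCoin C) (hA1 : SatisfiesA1 C M₀)
    (S Cop : H →L[ℂ] H) (hS : IsShiftOp S) (hCop : IsCoinOp Cop C)
    (hUnit : S.comp Cop ∈ unitary (H →L[ℂ] H)) :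
    spectrum ℂ (S.comp Cop) = {z : ℂ | ‖z‖ = 1} ∧
    ∀ z : ℂ, (∃ u : H, u ≠ 0 ∧ (S.comp Cop) u = z • u) →
      ‖z‖ = 1 ∧
      FiniteDimensional ℂ (Module.End.eigenspace (↑(S.comp Cop) : H →ₗ[ℂ] H) z) :=
  perturbed_walk_spectrum_general M₀ C hA1 S Cop hS hCop hUnit

end QWPaper
end
end

section
/- Assume (A-1). Let θ₁, θ₂ ∈ ℂ with Im θ₁ < 0 and Im θ₂ < 0, and let z ∈ ℂ satisfy |z| > e^{Im θ₁} and |z| > e^{Im θ₂}. Then z is an eigenvalue of U(θ₁) if and only if z is an eigenvalue of U(θ₂). In particular, the notion of resonance of U does not depend on the choice of θ. -/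
noncomputable section

/-!
Multiplication by `D_x(θ₂ - θ₁)` intertwines the two translated walks pointwise: the coins satisfy
`M(θ₂) D(θ₂ - θ₁) = D(θ₂ - θ₁) M(θ₁)`, and the shift satisfies `S D(δ) = e^{iδ} D(δ) S`. So it maps
pointwise solutions of `U(θ₁) u = z u` to pointwise solutions of `U(θ₂) v = z v`; since it is
unbounded, what has to be proved is that `v` is again square summable.

Off `Ω^i` the coin is trivial, so each component of `u` satisfies a free recursion along its line
of motion with multiplier `z e^{iθ₁}`, of modulus `> 1`. Boundedness forces `u` to vanish on lines
missing `Ω^i` and on the incoming side of `Ω^i`, and makes it decay geometrically on the outgoing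
side. The weight `D(θ₂ - θ₁)` changes the multiplier into `z e^{iθ₂}`, still of modulus `> 1`, so
`v` still decays geometrically.
-/

section Recursion

variable {𝕜 : Type*} [NormedDivisionRing 𝕜] {r : 𝕜} {w : ℤ → 𝕜}

theorem eq_pow_mul_of_forall_mul {a : ℤ} (k : ℕ)
    (hrec : ∀ n, a ≤ n → n < a + k → w (n + 1) = r * w n) : w (a + k) = r ^ k * w a := by
  induction k with
  | zero => simp
  | succ k ih =>
    rw [Nat.cast_succ, ← add_assoc, hrec _ (by omega) (by omega),
      ih fun n h₁ h₂ => hrec n h₁ (by omega), pow_succ', mul_assoc]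

theorem eq_zero_of_bounded_of_forall_ge_mul (hr : 1 < ‖r‖) {B : ℝ} (hB : ∀ n, ‖w n‖ ≤ B)
    {N : ℤ} (hrec : ∀ n, N ≤ n → w (n + 1) = r * w n) {n : ℤ} (hn : N ≤ n) : w n = 0 := by
  have hiter (k : ℕ) : w (N + k) = r ^ k * w N :=
    eq_pow_mul_of_forall_mul k fun m h _ => hrec m h
  have hN : w N = 0 := by
    by_contra h
    obtain ⟨k, hk⟩ := pow_unbounded_of_one_lt (B / ‖w N‖) hr
    have hbound := hB (N + k)
    rw [hiter, norm_mul, norm_pow] at hbound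
    rw [div_lt_iff₀ (norm_pos_iff.2 h)] at hk
    linarith
  obtain ⟨k, rfl⟩ := Int.exists_add_of_le hn
  rw [hiter, hN, mul_zero]

theorem norm_eq_zpow_mul_of_forall_lt_mul (hr : r ≠ 0) {N : ℤ}
    (hrec : ∀ n, n < N → w (n + 1) = r * w n) {n : ℤ} (hn : n ≤ N) :
    ‖w n‖ = ‖r‖ ^ (n - N) * ‖w N‖ := by
  obtain ⟨k, rfl⟩ := Int.exists_add_of_le hn
  rw [eq_pow_mul_of_forall_mul k fun m _ h => hrec m h, norm_mul, norm_pow, ← mul_assoc,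
    show n - (n + k) = -(k : ℤ) by ring, zpow_neg, zpow_natCast,
    inv_mul_cancel₀ (pow_ne_zero _ (norm_ne_zero_iff.2 hr)), one_mul]

end Recursion

section GeometricDecay

theorem summable_pow_natAbs {s : ℝ} (h₀ : 0 ≤ s) (h₁ : s < 1) :
    Summable fun n : ℤ => s ^ n.natAbs :=
  Summable.of_nat_of_neg (by simpa using summable_geometric_of_lt_one h₀ h₁)
    (by simpa using summable_geometric_of_lt_one h₀ h₁)

theorem zpow_le_zpow_mul_inv_pow_natAbs {R : ℝ} (hR : 1 ≤ R) {m k n : ℤ} (h : m + |n| ≤ k) :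
    R ^ m ≤ R ^ k * R⁻¹ ^ n.natAbs := by
  rw [inv_pow, ← zpow_natCast, Int.natCast_natAbs, ← zpow_neg,
    ← zpow_add₀ (one_pos.trans_le hR).ne']
  exact zpow_le_zpow_right₀ hR (by omega)

theorem summable_sq_of_le_zpow {a : ℤ × ℤ → ℝ} {K R : ℝ} {N : ℤ} (hR : 1 < R) (hN : 0 ≤ N)
    (ha : 0 ≤ a) (hzero : ∀ c n, N < |c| ∨ N ≤ n → a (c, n) = 0)
    (hle : ∀ c n, a (c, n) ≤ K * R ^ n) : Summable fun p => a p ^ 2 := by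
  have hK : 0 ≤ K := nonneg_of_mul_nonneg_left ((ha _).trans (hle 0 0)) (zpow_pos (by linarith) _)
  have hbound (p : ℤ × ℤ) : a p ≤ K * R ^ (3 * N) * R⁻¹ ^ p.1.natAbs * R⁻¹ ^ p.2.natAbs := by
    obtain ⟨c, n⟩ := p
    by_cases h : N < |c| ∨ N ≤ n
    · rw [hzero c n h]
      positivity
    push Not at h
    calc a (c, n) ≤ K * R ^ n := hle c n
      _ ≤ K * (R ^ (3 * N - |c|) * R⁻¹ ^ n.natAbs) := by
        gcongr
        refine zpow_le_zpow_mul_inv_pow_natAbs hR.le ?_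
        cases abs_cases n <;> omega
      _ ≤ K * (R ^ (3 * N) * R⁻¹ ^ c.natAbs * R⁻¹ ^ n.natAbs) := by
        gcongr
        exact zpow_le_zpow_mul_inv_pow_natAbs hR.le (by omega)
      _ = _ := by ring
  have hgeom := summable_pow_natAbs (sq_nonneg R⁻¹)
    (pow_lt_one₀ (inv_nonneg.2 (one_pos.trans hR).le) (inv_lt_one_of_one_lt₀ hR) two_ne_zero)
  have hsum := (hgeom.mul_of_nonneg hgeom (fun _ => by positivity)
    (fun _ => by positivity)).mul_left ((K * R ^ (3 * N)) ^ 2)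
  refine Summable.of_nonneg_of_le (fun p => sq_nonneg _) (fun p => ?_) hsum
  calc a p ^ 2 ≤ (K * R ^ (3 * N) * R⁻¹ ^ p.1.natAbs * R⁻¹ ^ p.2.natAbs) ^ 2 :=
        pow_le_pow_left₀ (ha p) (hbound p) 2
    _ = _ := by ring

end GeometricDecay

namespace QWPaper

open Complex
open scoped Matrix

/-- Position `n` on the line of motion of chirality `i` at transverse coordinate `c`, oriented so
that the shift carries component `i` from position `n + 1` to position `n`. -/
def lineSite (i : Chir) (c n : ℤ) : Site := ![(n, c), (-n, c), (c, n), (c, -n)] i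

def lineEquiv (i : Chir) : ℤ × ℤ ≃ Site where
  toFun p := lineSite i p.1 p.2
  invFun x := (![x.2, x.2, x.1, x.1] i, ![x.1, -x.1, x.2, -x.2] i)
  left_inv p := by fin_cases i <;> simp [lineSite]
  right_inv x := by fin_cases i <;> simp [lineSite]

theorem lineSite_mem_innerDom {M₀ : ℤ} (i : Chir) (c n : ℤ) :
    lineSite i c n ∈ innerDom M₀ ↔ |n| ≤ M₀ ∧ |c| ≤ M₀ := by
  fin_cases i <;> simp [lineSite, innerDom, and_comm]

theorem ptShift_lineSite (v : Site → Chir → ℂ) (i : Chir) (c n : ℤ) :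
    ptShift v (lineSite i c n) i = v (lineSite i c (n + 1)) i := by
  fin_cases i <;> simp [ptShift, lineSite] <;> ring_nf

theorem Dmat_lineSite (θ : ℂ) (i : Chir) (c n : ℤ) :
    Dmat θ (lineSite i c n) i i = exp (n * (I * θ)) := by
  fin_cases i <;> simp [Dmat, lineSite] <;> ring_nf

theorem Dmat_mul_Dmat (θ θ' : ℂ) (x : Site) : Dmat θ x * Dmat θ' x = Dmat (θ + θ') x := by
  rw [Dmat, Dmat, Matrix.diagonal_mul_diagonal, Dmat]
  congr 1
  funext j
  fin_cases j <;> simp [← Complex.exp_add] <;> ring_nf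

theorem Dmat_zero (x : Site) : Dmat 0 x = 1 := by
  rw [Dmat, ← Matrix.diagonal_one]
  congr 1
  funext j
  fin_cases j <;> simp

theorem Dmat_inv (θ : ℂ) (x : Site) : (Dmat θ x)⁻¹ = Dmat (-θ) x :=
  Matrix.inv_eq_right_inv (by rw [Dmat_mul_Dmat, add_neg_cancel, Dmat_zero])

theorem transCoin_eq_one {θ : ℂ} {C : Site → Matrix Chir Chir ℂ} {x : Site} (h : C x = 1) :
    transCoin θ C x = 1 := by
  rw [transCoin, h, Matrix.mul_one, Dmat_inv, Dmat_mul_Dmat, add_neg_cancel, Dmat_zero]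

theorem transCoin_mul_Dmat_sub (θ₁ θ₂ : ℂ) (C : Site → Matrix Chir Chir ℂ) (x : Site) :
    transCoin θ₂ C x * Dmat (θ₂ - θ₁) x = Dmat (θ₂ - θ₁) x * transCoin θ₁ C x := by
  simp only [transCoin, Dmat_inv, Matrix.mul_assoc, Dmat_mul_Dmat]
  rw [← Matrix.mul_assoc (Dmat (θ₂ - θ₁) x), Dmat_mul_Dmat, show -θ₂ + (θ₂ - θ₁) = -θ₁ by ring,
    sub_add_cancel]

theorem ptCoin_eq_mulVec (A : Site → Matrix Chir Chir ℂ) (u : Site → Chir → ℂ) (x : Site) :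
    ptCoin A u x = A x *ᵥ u x := rfl

theorem ptCoin_ptCoin (A B : Site → Matrix Chir Chir ℂ) (u : Site → Chir → ℂ) :
    ptCoin A (ptCoin B u) = ptCoin (fun x => A x * B x) u := by
  funext x
  simp only [ptCoin_eq_mulVec, Matrix.mulVec_mulVec]

theorem ptCoin_Dmat_apply (θ : ℂ) (u : Site → Chir → ℂ) (x : Site) (i : Chir) :
    ptCoin (Dmat θ) u x i = Dmat θ x i i * u x i := by
  rw [ptCoin_eq_mulVec, Dmat, Matrix.mulVec_diagonal, Matrix.diagonal_apply_eq]

theorem ptCoin_smul (A : Site → Matrix Chir Chir ℂ) (μ : ℂ) (u : Site → Chir → ℂ) :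
    ptCoin A (μ • u) = μ • ptCoin A u := by
  funext x
  simp only [ptCoin_eq_mulVec, Pi.smul_apply, Matrix.mulVec_smul]

theorem ptShift_ptCoin_Dmat (δ : ℂ) (v : Site → Chir → ℂ) :
    ptShift (ptCoin (Dmat δ) v) = exp (I * δ) • ptCoin (Dmat δ) (ptShift v) := by
  funext x i
  obtain ⟨⟨c, n⟩, rfl⟩ := (lineEquiv i).surjective x
  change ptShift _ (lineSite i c n) i = exp (I * δ) * ptCoin _ _ (lineSite i c n) i
  simp only [ptShift_lineSite, ptCoin_Dmat_apply, Dmat_lineSite]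
  push_cast
  rw [add_mul, one_mul, Complex.exp_add]
  ring

theorem ptWalk_ptCoin_Dmat_sub (θ₁ θ₂ : ℂ) (C : Site → Matrix Chir Chir ℂ)
    (u : Site → Chir → ℂ) :
    ptWalk (transCoin θ₂ C) (ptCoin (Dmat (θ₂ - θ₁)) u)
      = exp (I * (θ₂ - θ₁)) • ptCoin (Dmat (θ₂ - θ₁)) (ptWalk (transCoin θ₁ C) u) := by
  rw [ptWalk, ptWalk, ptCoin_ptCoin, funext (transCoin_mul_Dmat_sub θ₁ θ₂ C), ← ptCoin_ptCoin,
    ptShift_ptCoin_Dmat]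

theorem ptCoin_Dmat_injective (δ : ℂ) : Function.Injective (ptCoin (Dmat δ)) := by
  refine Function.LeftInverse.injective (g := ptCoin (Dmat (-δ))) fun u => ?_
  rw [ptCoin_ptCoin]
  funext x
  simp only [ptCoin_eq_mulVec, Dmat_mul_Dmat, neg_add_cancel, Dmat_zero, Matrix.one_mulVec]

def ptOf (u : H) : Site → Chir → ℂ := fun x i => u x i

theorem ptOf_injective : Function.Injective ptOf := fun u w h => by
  ext x i
  exact congrFun (congrFun h x) i

theorem IsShiftOp.apply_eq_ptShift {S : H →L[ℂ] H} (hS : IsShiftOp S) (u : H) (x : Site)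
    (i : Chir) : S u x i = ptShift (ptOf u) x i := by
  fin_cases i <;> simp [ptShift, ptOf, hS u x]

theorem IsCoinOp.ptOf_eq {M : H →L[ℂ] H} {A : Site → Matrix Chir Chir ℂ} (hM : IsCoinOp M A)
    (u : H) : ptOf (M u) = ptCoin A (ptOf u) :=
  funext fun x => funext (hM u x)

theorem transWalkOp_apply {θ : ℂ} {S M : H →L[ℂ] H} {A : Site → Matrix Chir Chir ℂ}
    (hS : IsShiftOp S) (hM : IsCoinOp M A) (u : H) (x : Site) (i : Chir) :
    transWalkOp θ S M u x i = exp (-(I * θ)) * ptWalk A (ptOf u) x i := by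
  simp [transWalkOp, hS.apply_eq_ptShift, hM.ptOf_eq, ptWalk]

theorem transWalkOp_eq_smul_iff {θ z : ℂ} {S M : H →L[ℂ] H} {A : Site → Matrix Chir Chir ℂ}
    (hS : IsShiftOp S) (hM : IsCoinOp M A) (u : H) :
    transWalkOp θ S M u = z • u ↔ ptWalk A (ptOf u) = (z * exp (I * θ)) • ptOf u := by
  have key (x : Site) (i : Chir) :
      transWalkOp θ S M u x i = (z • u) x i ↔ ptWalk A (ptOf u) x i = z * exp (I * θ) * u x i := by
    rw [transWalkOp_apply hS hM, Complex.exp_neg, inv_mul_eq_iff_eq_mul₀ (exp_ne_zero _)]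
    simp only [lp.coeFn_smul, Pi.smul_apply, PiLp.smul_apply, smul_eq_mul]
    rw [mul_left_comm, ← mul_assoc]
  constructor
  · intro h
    funext x i
    exact (key x i).1 (by rw [h])
  · intro h
    ext x i
    exact (key x i).2 (congrFun (congrFun h x) i)

theorem memℓp_toLp_of_summable_lineSite {g : Site → Chir → ℂ}
    (h : ∀ i, Summable fun p : ℤ × ℤ => ‖g (lineSite i p.1 p.2) i‖ ^ 2) :
    Memℓp (fun x => (WithLp.toLp 2 (g x) : V)) 2 := by
  refine memℓp_gen ?_
  have htwo : (2 : ENNReal).toReal = 2 := by norm_num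
  simp only [htwo, Real.rpow_two, EuclideanSpace.norm_sq_eq]
  exact summable_sum fun i _ => (lineEquiv i).summable_iff.1 (h i)

section Eigenfunction

variable {M₀ : ℤ} {A : Site → Matrix Chir Chir ℂ} {μ : ℂ} {f : Site → Chir → ℂ}

theorem ptWalk_eigen_lineSite_succ (hA : ∀ x, x ∉ innerDom M₀ → A x = 1)
    (hf : ptWalk A f = μ • f) {i : Chir} {c n : ℤ} (h : lineSite i c (n + 1) ∉ innerDom M₀) :
    f (lineSite i c (n + 1)) i = μ * f (lineSite i c n) i := by
  have := congrFun (congrFun hf (lineSite i c n)) i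
  rwa [ptWalk, ptShift_lineSite, ptCoin_eq_mulVec, hA _ h, Matrix.one_mulVec] at this

theorem ptWalk_eigen_lineSite_eq_zero (hA : ∀ x, x ∉ innerDom M₀ → A x = 1)
    (hf : ptWalk A f = μ • f) (hμ : 1 < ‖μ‖) {B : ℝ} (hB : ∀ x i, ‖f x i‖ ≤ B) {i : Chir}
    {c n : ℤ} (h : M₀ < |c| ∨ M₀ ≤ n) : f (lineSite i c n) i = 0 :=
  eq_zero_of_bounded_of_forall_ge_mul hμ (fun _ => hB _ i)
    (fun m hm => ptWalk_eigen_lineSite_succ hA hf (by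
      rw [lt_abs] at h
      rw [lineSite_mem_innerDom, abs_le, abs_le]
      omega)) le_rfl

theorem ptWalk_eigen_lineSite_norm_le (hA : ∀ x, x ∉ innerDom M₀ → A x = 1)
    (hf : ptWalk A f = μ • f) (hμ : 1 < ‖μ‖) {B : ℝ} (hB : ∀ x i, ‖f x i‖ ≤ B) (i : Chir)
    (c n : ℤ) : ‖f (lineSite i c n) i‖ ≤ B * ‖μ‖ ^ (n + M₀ + 1) := by
  rcases le_or_gt n (-M₀ - 1) with hn | hn
  · have hrec (m : ℤ) (hm : m < -M₀ - 1) :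
        f (lineSite i c (m + 1)) i = μ * f (lineSite i c m) i :=
      ptWalk_eigen_lineSite_succ hA hf (by rw [lineSite_mem_innerDom, abs_le]; omega)
    rw [norm_eq_zpow_mul_of_forall_lt_mul (w := fun m => f (lineSite i c m) i)
      (norm_pos_iff.1 (one_pos.trans hμ)) hrec hn, mul_comm,
      show n - (-M₀ - 1) = n + M₀ + 1 by ring]
    exact mul_le_mul_of_nonneg_right (hB _ _) (zpow_nonneg (norm_nonneg _) _)
  · calc ‖f (lineSite i c n) i‖ ≤ B := hB _ _
      _ ≤ B * ‖μ‖ ^ (n + M₀ + 1) :=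
        le_mul_of_one_le_right ((norm_nonneg _).trans (hB (lineSite i c n) i))
          (one_le_zpow₀ hμ.le (by omega))

theorem norm_ptCoin_Dmat_eigen_lineSite_le (hA : ∀ x, x ∉ innerDom M₀ → A x = 1)
    (hf : ptWalk A f = μ • f) (hμ : 1 < ‖μ‖) {B : ℝ} (hB : ∀ x i, ‖f x i‖ ≤ B) (δ : ℂ)
    (i : Chir) (c n : ℤ) :
    ‖ptCoin (Dmat δ) f (lineSite i c n) i‖ ≤ B * ‖μ‖ ^ (M₀ + 1) * ‖exp (I * δ) * μ‖ ^ n := by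
  rw [ptCoin_Dmat_apply, Dmat_lineSite, norm_mul, Complex.exp_int_mul, norm_zpow]
  calc ‖exp (I * δ)‖ ^ n * ‖f (lineSite i c n) i‖
      ≤ ‖exp (I * δ)‖ ^ n * (B * ‖μ‖ ^ (n + (M₀ + 1))) := by
        rw [← add_assoc]
        gcongr
        exact ptWalk_eigen_lineSite_norm_le hA hf hμ hB i c n
    _ = B * ‖μ‖ ^ (M₀ + 1) * ‖exp (I * δ) * μ‖ ^ n := by
        rw [zpow_add₀ (norm_pos_iff.2 (norm_pos_iff.1 (one_pos.trans hμ))).ne', norm_mul, mul_zpow]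
        ring

theorem memℓp_ptCoin_Dmat_of_eigen (hA : ∀ x, x ∉ innerDom M₀ → A x = 1) (hM₀ : 0 ≤ M₀)
    (hf : ptWalk A f = μ • f) (hμ : 1 < ‖μ‖) {B : ℝ} (hB : ∀ x i, ‖f x i‖ ≤ B) {δ : ℂ}
    (hδμ : 1 < ‖exp (I * δ) * μ‖) : Memℓp (fun x => (WithLp.toLp 2 (ptCoin (Dmat δ) f x) : V)) 2 :=
  memℓp_toLp_of_summable_lineSite fun i => summable_sq_of_le_zpow hδμ hM₀ (fun _ => norm_nonneg _)
    (fun c n h => norm_eq_zero.2 (by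
      rw [ptCoin_Dmat_apply, ptWalk_eigen_lineSite_eq_zero hA hf hμ hB h, mul_zero]))
    (norm_ptCoin_Dmat_eigen_lineSite_le hA hf hμ hB δ i)

end Eigenfunction

theorem one_lt_norm_mul_exp_I_mul {z θ : ℂ} (h : Real.exp θ.im < ‖z‖) :
    1 < ‖z * exp (I * θ)‖ := by
  rw [norm_mul, Complex.norm_exp, show (I * θ).re = -θ.im by simp, Real.exp_neg,
    ← div_eq_mul_inv, one_lt_div (Real.exp_pos _)]
  exact h

theorem norm_ptOf_le (u : H) (x : Site) (i : Chir) : ‖ptOf u x i‖ ≤ ‖u‖ :=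
  (PiLp.norm_apply_le (u x) i).trans (lp.norm_apply_le_norm two_ne_zero u x)

theorem exists_eigenvector_transWalkOp_of_exists {M₀ : ℤ} {C : Site → Matrix Chir Chir ℂ}
    (hA1 : SatisfiesA1 C M₀) {S : H →L[ℂ] H} (hS : IsShiftOp S) {θ₁ θ₂ : ℂ}
    {M1 M2 : H →L[ℂ] H} (hM1 : IsCoinOp M1 (transCoin θ₁ C)) (hM2 : IsCoinOp M2 (transCoin θ₂ C))
    {z : ℂ} (hz1 : Real.exp θ₁.im < ‖z‖) (hz2 : Real.exp θ₂.im < ‖z‖) {u : H} (hu0 : u ≠ 0)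
    (hu : transWalkOp θ₁ S M1 u = z • u) : ∃ v : H, v ≠ 0 ∧ transWalkOp θ₂ S M2 v = z • v := by
  obtain ⟨hM₀, hC⟩ := hA1
  have hA (x : Site) (hx : x ∉ innerDom M₀) : transCoin θ₁ C x = 1 := transCoin_eq_one (hC x hx)
  have hf := (transWalkOp_eq_smul_iff hS hM1 u).1 hu
  have hμ₂ : exp (I * (θ₂ - θ₁)) * (z * exp (I * θ₁)) = z * exp (I * θ₂) := by
    rw [mul_left_comm, ← Complex.exp_add]
    ring_nf
  have hmem := memℓp_ptCoin_Dmat_of_eigen hA (by omega) hf (one_lt_norm_mul_exp_I_mul hz1)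
    (norm_ptOf_le u) (hμ₂ ▸ one_lt_norm_mul_exp_I_mul hz2)
  refine ⟨⟨_, hmem⟩, fun hv => hu0 (ptOf_injective (ptCoin_Dmat_injective (θ₂ - θ₁) ?_)), ?_⟩
  · funext x i
    simpa [ptOf, ptCoin] using congrArg (fun v : H => v x i) hv
  · rw [transWalkOp_eq_smul_iff hS hM2]
    change ptWalk (transCoin θ₂ C) (ptCoin (Dmat (θ₂ - θ₁)) (ptOf u))
      = (z * exp (I * θ₂)) • ptCoin (Dmat (θ₂ - θ₁)) (ptOf u)
    rw [ptWalk_ptCoin_Dmat_sub, hf, ptCoin_smul, smul_smul, hμ₂]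

theorem resonance_independent_of_theta_general
    (M₀ : ℤ) (C : Site → Matrix Chir Chir ℂ)
    (hA1 : SatisfiesA1 C M₀)
    (S : H →L[ℂ] H) (hS : IsShiftOp S)
    (θ₁ θ₂ : ℂ)
    (M1 M2 : H →L[ℂ] H)
    (hM1 : IsCoinOp M1 (transCoin θ₁ C)) (hM2 : IsCoinOp M2 (transCoin θ₂ C))
    (z : ℂ) (hz1 : Real.exp θ₁.im < ‖z‖) (hz2 : Real.exp θ₂.im < ‖z‖) :
    (∃ u : H, u ≠ 0 ∧ (transWalkOp θ₁ S M1) u = z • u) ↔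
    (∃ u : H, u ≠ 0 ∧ (transWalkOp θ₂ S M2) u = z • u) :=
  ⟨fun ⟨_, hu0, hu⟩ => exists_eigenvector_transWalkOp_of_exists hA1 hS hM1 hM2 hz1 hz2 hu0 hu,
    fun ⟨_, hu0, hu⟩ => exists_eigenvector_transWalkOp_of_exists hA1 hS hM2 hM1 hz2 hz1 hu0 hu⟩

/-- eigenvalues of `U(θ)` outside the circle of radius `e^{Im θ}` do not depend on
the choice of `θ`; in particular the notion of resonance is independent of `θ`. -/
theorem resonance_independent_of_theta
    (M₀ : ℤ) (C : Site → Matrix Chir Chir ℂ)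
    (hC : IsUnitaryCoin C) (hA1 : SatisfiesA1 C M₀)
    (S : H →L[ℂ] H) (hS : IsShiftOp S)
    (θ₁ θ₂ : ℂ) (hθ₁ : θ₁.im < 0) (hθ₂ : θ₂.im < 0)
    (M1 M2 : H →L[ℂ] H)
    (hM1 : IsCoinOp M1 (transCoin θ₁ C)) (hM2 : IsCoinOp M2 (transCoin θ₂ C))
    (z : ℂ) (hz1 : Real.exp θ₁.im < ‖z‖) (hz2 : Real.exp θ₂.im < ‖z‖) :
    (∃ u : H, u ≠ 0 ∧ (transWalkOp θ₁ S M1) u = z • u) ↔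
    (∃ u : H, u ≠ 0 ∧ (transWalkOp θ₂ S M2) u = z • u) :=
  resonance_independent_of_theta_general M₀ C hA1 S hS θ₁ θ₂ M1 M2 hM1 hM2 z hz1 hz2

end QWPaper
end
end

section
/- Assume (A-1). Let κ ∈ ℂ with Im κ < 0 and θ ∈ ℂ with Im θ < Im κ. Then e^{−iκ} is an eigenvalue of U(θ) if and only if there exists a nonzero outgoing map u : ℤ² → ℂ⁴ satisfying Uu = e^{−iκ}u pointwise. Moreover, for any such outgoing solution u the sequences a_←, a_→, a_↓, a_↑ are supported in {−M₀, −M₀+1, …, M₀}, and a pointwise solution u of Uu = e^{−iκ}u is outgoing if and only if the map x ↦ D_x(θ)u(x) belongs to H. -/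
noncomputable section

namespace QWPaper

open Complex

/-!
Off `Ω^i` the coin is the identity, so along each lattice line travelled by a fixed chirality a
pointwise solution of `Uu = e^{−iκ}u` satisfies `u(m + 1) = e^{−iκ} u(m)`: the profile
`e^{iκm} u(m)` is constant on both half-lines outside `[−M₀, M₀]`, and on a line that misses `Ω^i`
it is constant everywhere. Multiplying by `D_x(θ)` weights the `m`-th term by `e^{iθm}`. On the
outgoing half-line this produces a geometric series of ratio `e^{2(Im θ − Im κ)} < 1`, while on the
incoming half-line the modulus grows by the factor `e^{Im κ − Im θ} > 1` at each step, so
boundedness forces the solution to vanish there; a line missing `Ω^i` then vanishes entirely,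
which gives the support of the sequences `a`. Finally `D(θ)` intertwines `U(θ)` with the pointwise
walk, so the eigenvectors of `U(θ)` for `e^{−iκ}` are exactly the maps `D(θ)u` with `u` an
outgoing solution.
-/

open Matrix

/-- `chirLine i (n, m)` is the `m`-th site on the `n`-th lattice line along which chirality `i`
moves, with `m` increasing against the direction of motion: the shift carries the `i`-component
at `m + 1` to `m`. -/
def chirLine : Chir → ℤ × ℤ ≃ Site :=
  ![Equiv.prodComm ℤ ℤ, (Equiv.prodCongr (Equiv.refl ℤ) (Equiv.neg ℤ)).trans (Equiv.prodComm ℤ ℤ),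
    Equiv.refl _, Equiv.prodCongr (Equiv.refl ℤ) (Equiv.neg ℤ)]

lemma chirLine_mem_innerDom {M : ℤ} (i : Chir) (p : ℤ × ℤ) :
    chirLine i p ∈ innerDom M ↔ |p.1| ≤ M ∧ |p.2| ≤ M := by
  fin_cases i <;> simp [chirLine, innerDom, and_comm]

lemma SatisfiesA1.coin_chirLine_eq_one {C : Site → Matrix Chir Chir ℂ} {M₀ : ℤ}
    (hA1 : SatisfiesA1 C M₀) (i : Chir) {p : ℤ × ℤ} (hp : M₀ < |p.1| ∨ M₀ < |p.2|) :
    C (chirLine i p) = 1 :=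
  hA1.2 _ (by rw [chirLine_mem_innerDom]; omega)

lemma Dmat_chirLine_mulVec (θ : ℂ) (i : Chir) (p : ℤ × ℤ) (w : Chir → ℂ) :
    (Dmat θ (chirLine i p) *ᵥ w) i = exp (I * θ * p.2) * w i := by
  fin_cases i <;> simp [chirLine, Dmat, mulVec_diagonal]

lemma ptShift_chirLine (v : Site → Chir → ℂ) (i : Chir) (n m : ℤ) :
    ptShift v (chirLine i (n, m)) i = v (chirLine i (n, m + 1)) i := by
  fin_cases i <;> simp [chirLine, ptShift] <;> ring_nf

lemma IsShiftOp.apply_chirLine {S : H →L[ℂ] H} (hS : IsShiftOp S) (w : H) (i : Chir) (n m : ℤ) :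
    S w (chirLine i (n, m)) i = w (chirLine i (n, m + 1)) i := by
  fin_cases i
  · exact (hS w _).1
  · simpa [chirLine, neg_add, sub_eq_add_neg, add_comm] using (hS w (-m, n)).2.1
  · exact (hS w _).2.2.1
  · simpa [chirLine, neg_add, sub_eq_add_neg, add_comm] using (hS w (n, -m)).2.2.2

lemma IsPtSolution.apply_chirLine_succ {C : Site → Matrix Chir Chir ℂ} {κ : ℂ}
    {u : Site → Chir → ℂ} (hu : IsPtSolution C κ u) {i : Chir} {n m : ℤ}
    (hC : C (chirLine i (n, m + 1)) = 1) :
    u (chirLine i (n, m + 1)) i = exp (-(I * κ)) * u (chirLine i (n, m)) i := by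
  rw [← hu, ptWalk, ptShift_chirLine]
  simp [ptCoin, hC, one_apply]

lemma isOutgoingWith_iff_chirLine {M₀ : ℤ} {κ : ℂ} {aL aR aD aU : ℤ → ℂ} {u : Site → Chir → ℂ} :
    IsOutgoingWith M₀ κ aL aR aD aU u ↔ ∀ (i : Chir) (n m : ℤ),
      (m < -M₀ → u (chirLine i (n, m)) i = ![aL, aR, aD, aU] i n * exp (-(I * κ * m))) ∧
      (M₀ < m → u (chirLine i (n, m)) i = 0) := by
  constructor
  · rintro ⟨hL, hL0, hR0, hR, hD, hD0, hU0, hU⟩ i n m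
    fin_cases i
    · exact ⟨hL (m, n), hL0 (m, n)⟩
    · refine ⟨fun hm => ?_, fun hm => hR0 (-m, n) (by simpa using hm)⟩
      simpa [chirLine] using hR (-m, n) (by simp; omega)
    · exact ⟨hD (n, m), hD0 (n, m)⟩
    · refine ⟨fun hm => ?_, fun hm => hU0 (n, -m) (by simpa using hm)⟩
      simpa [chirLine] using hU (n, -m) (by simp; omega)
  · intro h
    refine ⟨fun x hx => (h 0 x.2 x.1).1 hx, fun x hx => (h 0 x.2 x.1).2 hx,
      fun x hx => by simpa [chirLine] using (h 1 x.2 (-x.1)).2 (by omega),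
      fun x hx => ?_, fun x hx => (h 2 x.1 x.2).1 hx, fun x hx => (h 2 x.1 x.2).2 hx,
      fun x hx => by simpa [chirLine] using (h 3 x.1 (-x.2)).2 (by omega), fun x hx => ?_⟩
    · simpa [chirLine] using (h 1 x.2 (-x.1)).1 (by omega)
    · simpa [chirLine] using (h 3 x.1 (-x.2)).1 (by omega)

lemma norm_exp_mul_exp_neg (θ κ : ℂ) :
    ‖exp (I * θ) * exp (-(I * κ))‖ = Real.exp (κ.im - θ.im) := by
  rw [← exp_add, norm_exp]
  simp [Complex.mul_re]
  ring

section LineProfile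

variable {κ θ : ℂ} {f : ℤ → ℂ}

lemma eq_mul_exp_of_succ_eq {b : ℤ} (h : ∀ m < b, f (m + 1) = exp (-(I * κ)) * f m) :
    ∀ m ≤ b, f m = f b * exp (I * κ * b) * exp (-(I * κ * m)) := by
  intro m hm
  induction m, hm using Int.leInductionDown with
  | base => rw [mul_assoc, ← exp_add]; simp
  | pred k hk ih =>
    have hstep := h (k - 1) (by omega)
    rw [sub_add_cancel, ih] at hstep
    have hE : exp (I * κ) * exp (-(I * κ)) = 1 := by rw [← exp_add]; simp
    rw [show -(I * κ * ((k - 1 : ℤ) : ℂ)) = -(I * κ * k) + I * κ by push_cast; ring, exp_add]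
    linear_combination (-exp (I * κ)) * hstep - f (k - 1) * hE

lemma eq_zero_of_forall_succ_eq {M : ℤ} (h : ∀ m, f (m + 1) = exp (-(I * κ)) * f m)
    (hr : ∀ m, M < m → f m = 0) (m : ℤ) : f m = 0 := by
  rw [eq_mul_exp_of_succ_eq (b := max m (M + 1)) (fun k _ => h k) m (le_max_left _ _),
    hr _ (by omega)]
  simp

lemma eq_zero_of_succ_eq_of_bddAbove (hθ : θ.im < κ.im) {a : ℤ}
    (h : ∀ m ≥ a, f (m + 1) = exp (-(I * κ)) * f m)
    (hb : BddAbove (Set.range fun m : ℤ => ‖exp (I * θ * m) * f m‖)) :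
    ∀ m ≥ a, f m = 0 := by
  set ρ := Real.exp (κ.im - θ.im)
  have hρ : 1 < ρ := Real.one_lt_exp_iff.mpr (by linarith)
  have hgrow : ∀ m ≥ a, ∀ k : ℕ,
      ‖exp (I * θ * ↑(m + k)) * f (m + k)‖ = ρ ^ k * ‖exp (I * θ * m) * f m‖ := by
    intro m hm k
    induction k with
    | zero => simp
    | succ k ih =>
      rw [pow_succ', mul_assoc ρ, ← ih, show ρ = _ from (norm_exp_mul_exp_neg θ κ).symm,
        ← norm_mul, Nat.cast_succ, ← add_assoc, h _ (by omega)]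
      congr 1
      rw [show I * θ * ((m + k + 1 : ℤ) : ℂ) = I * θ + I * θ * ((m + k : ℤ) : ℂ) by push_cast; ring,
        exp_add]
      ring
  obtain ⟨B, hB⟩ := hb
  intro m hm
  by_contra hne
  have hpos : 0 < ‖exp (I * θ * m) * f m‖ := norm_pos_iff.mpr (mul_ne_zero (exp_ne_zero _) hne)
  obtain ⟨k, hk⟩ := pow_unbounded_of_one_lt (B / ‖exp (I * θ * m) * f m‖) hρ
  have hle : ‖exp (I * θ * ↑(m + k)) * f (m + k)‖ ≤ B := hB ⟨m + k, rfl⟩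
  rw [hgrow m hm k] at hle
  rw [div_lt_iff₀ hpos] at hk
  linarith

lemma summable_norm_exp_mul_sq_of_outgoing (hθ : θ.im < κ.im) {M : ℤ} {c : ℂ}
    (hl : ∀ m < -M, f m = c * exp (-(I * κ * m))) (hr : ∀ m, M < m → f m = 0) :
    Summable fun m : ℤ => ‖exp (I * θ * m) * f m‖ ^ 2 := by
  have hgeom (n : ℕ) : ‖exp (I * θ * ↑(-(n : ℤ))) * (c * exp (-(I * κ * ↑(-(n : ℤ)))))‖ ^ 2 =
      ‖c‖ ^ 2 * Real.exp (2 * (θ.im - κ.im)) ^ n := by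
    rw [mul_left_comm, ← exp_add, norm_mul, norm_exp, mul_pow, ← Real.exp_nat_mul,
      ← Real.exp_nat_mul]
    congr 2
    simp [Complex.mul_re]
    ring
  apply Summable.of_nat_of_neg
  · refine Summable.of_norm_bounded_eventually_nat summable_zero ?_
    filter_upwards [Filter.eventually_gt_atTop M.toNat] with n hn
    rw [hr n (by omega)]
    simp
  · refine Summable.of_norm_bounded_eventually_nat
      ((summable_geometric_of_lt_one (Real.exp_nonneg _)
        (Real.exp_lt_one_iff.mpr (by linarith : 2 * (θ.im - κ.im) < 0))).mul_left (‖c‖ ^ 2)) ?_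
    filter_upwards [Filter.eventually_gt_atTop M.toNat] with n hn
    rw [hl _ (by omega), hgeom, Real.norm_of_nonneg (by positivity)]

end LineProfile

lemma memℓp_of_summable_chirLine {θ : ℂ} {u : Site → Chir → ℂ}
    (h : ∀ i, Summable fun p : ℤ × ℤ => ‖exp (I * θ * p.2) * u (chirLine i p) i‖ ^ 2) :
    Memℓp (fun x : Site => (WithLp.toLp 2 (Dmat θ x *ᵥ u x) : V)) 2 := by
  refine memℓp_gen ?_
  simp only [ENNReal.toReal_ofNat, Real.rpow_two, EuclideanSpace.norm_sq_eq]
  refine summable_sum fun i _ => (chirLine i).summable_iff.mp ?_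
  simpa only [Function.comp_def, WithLp.ofLp_toLp, Dmat_chirLine_mulVec] using h i

lemma bddAbove_norm_exp_mul_chirLine {θ : ℂ} {u : Site → Chir → ℂ}
    (hmem : Memℓp (fun x : Site => (WithLp.toLp 2 (Dmat θ x *ᵥ u x) : V)) 2) (i : Chir) (n : ℤ) :
    BddAbove (Set.range fun m : ℤ => ‖exp (I * θ * m) * u (chirLine i (n, m)) i‖) := by
  obtain ⟨B, hB⟩ := memℓp_infty_iff.mp (hmem.of_exponent_ge le_top)
  refine ⟨B, ?_⟩
  rintro _ ⟨m, rfl⟩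
  have hle := PiLp.norm_apply_le
    (WithLp.toLp 2 (Dmat θ (chirLine i (n, m)) *ᵥ u (chirLine i (n, m)))) i
  rw [WithLp.ofLp_toLp, Dmat_chirLine_mulVec] at hle
  exact hle.trans (hB ⟨_, rfl⟩)

section Solution

variable {M₀ : ℤ} {C : Site → Matrix Chir Chir ℂ} {κ θ : ℂ} {u : Site → Chir → ℂ}

lemma IsPtSolution.eq_zero_on_chirLine_of_lt_abs (hu : IsPtSolution C κ u)
    (hA1 : SatisfiesA1 C M₀) {i : Chir} {n : ℤ} (hn : M₀ < |n|)
    (hr : ∀ m, M₀ < m → u (chirLine i (n, m)) i = 0) (m : ℤ) :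
    u (chirLine i (n, m)) i = 0 :=
  eq_zero_of_forall_succ_eq
    (fun _ => hu.apply_chirLine_succ (hA1.coin_chirLine_eq_one i (Or.inl hn))) hr m

lemma IsPtSolution.coeff_eq_zero_of_isOutgoingWith (hu : IsPtSolution C κ u)
    (hA1 : SatisfiesA1 C M₀) {aL aR aD aU : ℤ → ℂ} (hout : IsOutgoingWith M₀ κ aL aR aD aU u)
    (i : Chir) {n : ℤ} (hn : M₀ < |n|) : ![aL, aR, aD, aU] i n = 0 := by
  rw [isOutgoingWith_iff_chirLine] at hout
  have h := (hout i n (-(M₀ + 1))).1 (by omega)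
  rw [hu.eq_zero_on_chirLine_of_lt_abs hA1 hn fun m => (hout i n m).2] at h
  exact (mul_eq_zero.mp h.symm).resolve_right (exp_ne_zero _)

lemma IsPtSolution.memℓp_of_isOutgoing (hu : IsPtSolution C κ u) (hA1 : SatisfiesA1 C M₀)
    (hθ : θ.im < κ.im) (hout : IsOutgoing M₀ κ u) :
    Memℓp (fun x : Site => (WithLp.toLp 2 (Dmat θ x *ᵥ u x) : V)) 2 := by
  obtain ⟨aL, aR, aD, aU, hout⟩ := hout
  rw [isOutgoingWith_iff_chirLine] at hout
  refine memℓp_of_summable_chirLine fun i => ?_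
  refine (summable_prod_of_nonneg fun _ => by positivity).mpr ⟨fun n => ?_, ?_⟩
  · exact summable_norm_exp_mul_sq_of_outgoing hθ (fun m => (hout i n m).1) (hout i n · |>.2)
  · refine summable_of_ne_finset_zero (s := Finset.Icc (-M₀) M₀) fun n hn => ?_
    have hn : M₀ < |n| := by rw [Finset.mem_Icc] at hn; rw [lt_abs]; omega
    simp [hu.eq_zero_on_chirLine_of_lt_abs hA1 hn fun m => (hout i n m).2]

lemma IsPtSolution.isOutgoing_of_memℓp (hu : IsPtSolution C κ u) (hA1 : SatisfiesA1 C M₀)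
    (hθ : θ.im < κ.im) (hmem : Memℓp (fun x : Site => (WithLp.toLp 2 (Dmat θ x *ᵥ u x) : V)) 2) :
    IsOutgoing M₀ κ u := by
  set a : Chir → ℤ → ℂ := fun i n =>
    u (chirLine i (n, -(M₀ + 1))) i * exp (I * κ * ((-(M₀ + 1) : ℤ) : ℂ))
  have ha : ![a 0, a 1, a 2, a 3] = a := by ext i; fin_cases i <;> rfl
  refine ⟨a 0, a 1, a 2, a 3,
    isOutgoingWith_iff_chirLine.mpr fun i n m => ⟨fun hm => ?_, fun hm => ?_⟩⟩
  · rw [ha]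
    refine eq_mul_exp_of_succ_eq (f := fun m => u (chirLine i (n, m)) i) (b := -(M₀ + 1))
      (fun k hk => hu.apply_chirLine_succ ?_) m (by omega)
    exact hA1.coin_chirLine_eq_one i (Or.inr (by rw [lt_abs]; omega))
  · refine eq_zero_of_succ_eq_of_bddAbove (f := fun m => u (chirLine i (n, m)) i) hθ
      (a := M₀ + 1) (fun k hk => hu.apply_chirLine_succ ?_)
      (bddAbove_norm_exp_mul_chirLine hmem i n) m (by omega)
    exact hA1.coin_chirLine_eq_one i (Or.inr (by rw [lt_abs]; omega))

end Solution

lemma isUnit_Dmat (θ : ℂ) (x : Site) : IsUnit (Dmat θ x) := by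
  rw [isUnit_iff_isUnit_det, Dmat, det_diagonal, isUnit_iff_ne_zero]
  simp [Fin.prod_univ_four, exp_ne_zero]

lemma transCoin_mulVec_Dmat_mulVec (θ : ℂ) (C : Site → Matrix Chir Chir ℂ) (x : Site)
    (w : Chir → ℂ) : transCoin θ C x *ᵥ (Dmat θ x *ᵥ w) = Dmat θ x *ᵥ (C x *ᵥ w) := by
  rw [transCoin, mulVec_mulVec, mul_assoc,
    nonsing_inv_mul _ ((isUnit_iff_isUnit_det _).mp (isUnit_Dmat θ x)), mul_one, mulVec_mulVec]

lemma IsCoinOp.apply_eq_mulVec {A : H →L[ℂ] H} {C : Site → Matrix Chir Chir ℂ}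
    (hA : IsCoinOp A C) (v : H) (x : Site) : A v x = WithLp.toLp 2 (C x *ᵥ v x) :=
  PiLp.ext (hA v x)

lemma eq_toLp_Dmat_mulVec_inv_mulVec (θ : ℂ) (v : H) (x : Site) :
    v x = WithLp.toLp 2 (Dmat θ x *ᵥ ((Dmat θ x)⁻¹ *ᵥ v x)) := by
  rw [mulVec_mulVec, mul_nonsing_inv _ ((isUnit_iff_isUnit_det _).mp (isUnit_Dmat θ x)),
    one_mulVec, WithLp.toLp_ofLp]

section Conjugation

variable {C : Site → Matrix Chir Chir ℂ} {θ : ℂ} {S Mθ : H →L[ℂ] H} {u : Site → Chir → ℂ} {v : H}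

lemma transWalkOp_apply_of_eq_Dmat_mulVec (hS : IsShiftOp S) (hMθ : IsCoinOp Mθ (transCoin θ C))
    (hv : ∀ x, v x = WithLp.toLp 2 (Dmat θ x *ᵥ u x)) (x : Site) :
    transWalkOp θ S Mθ v x = WithLp.toLp 2 (Dmat θ x *ᵥ ptWalk C u x) := by
  refine PiLp.ext fun i => ?_
  obtain ⟨⟨n, m⟩, rfl⟩ := (chirLine i).surjective x
  have hexp : exp (-(I * θ)) * exp (I * θ * ((m + 1 : ℤ) : ℂ)) = exp (I * θ * m) := by
    rw [← exp_add]; push_cast; ring_nf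
  simp only [transWalkOp, _root_.smul_apply, ContinuousLinearMap.comp_apply, lp.coeFn_smul,
    Pi.smul_apply, PiLp.smul_apply, smul_eq_mul]
  rw [hS.apply_chirLine, hMθ.apply_eq_mulVec, hv, WithLp.ofLp_toLp, WithLp.ofLp_toLp,
    transCoin_mulVec_Dmat_mulVec, Dmat_chirLine_mulVec, Dmat_chirLine_mulVec, ← mul_assoc, hexp,
    ptWalk, ptShift_chirLine]
  rfl

lemma transWalkOp_eq_smul_iff_isPtSolution (hS : IsShiftOp S)
    (hMθ : IsCoinOp Mθ (transCoin θ C)) (κ : ℂ) (hv : ∀ x, v x = WithLp.toLp 2 (Dmat θ x *ᵥ u x)) :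
    transWalkOp θ S Mθ v = exp (-(I * κ)) • v ↔ IsPtSolution C κ u := by
  have hinj (x : Site) := mulVec_injective_iff_isUnit.mpr (isUnit_Dmat θ x)
  simp only [lp.ext_iff, funext_iff, lp.coeFn_smul, Pi.smul_apply,
    transWalkOp_apply_of_eq_Dmat_mulVec hS hMθ hv, hv, ← WithLp.toLp_smul, ← mulVec_smul,
    (WithLp.toLp_injective 2).eq_iff, (hinj _).eq_iff, IsPtSolution, smul_eq_mul]

lemma ne_zero_iff_of_eq_Dmat_mulVec (hv : ∀ x, v x = WithLp.toLp 2 (Dmat θ x *ᵥ u x)) :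
    v ≠ 0 ↔ u ≠ 0 := by
  have hinj (x : Site) := mulVec_injective_iff_isUnit.mpr (isUnit_Dmat θ x)
  simp only [ne_eq, lp.ext_iff, funext_iff, hv, lp.coeFn_zero, Pi.zero_apply, WithLp.toLp_eq_zero,
    (hinj _).eq_iff' (mulVec_zero _)]

end Conjugation

theorem resonance_iff_outgoing_solution_general
    (M₀ : ℤ) (C : Site → Matrix Chir Chir ℂ)
    (hA1 : SatisfiesA1 C M₀)
    (S : H →L[ℂ] H) (hS : IsShiftOp S)
    (κ θ : ℂ) (hθ : θ.im < κ.im)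
    (Mθ : H →L[ℂ] H) (hMθ : IsCoinOp Mθ (transCoin θ C)) :
    ((∃ v : H, v ≠ 0 ∧ (transWalkOp θ S Mθ) v = Complex.exp (-(Complex.I * κ)) • v) ↔
      (∃ u : Site → Chir → ℂ, u ≠ 0 ∧ IsOutgoing M₀ κ u ∧ IsPtSolution C κ u)) ∧
    (∀ u : Site → Chir → ℂ, IsPtSolution C κ u → IsOutgoing M₀ κ u →
      ∃ aL aR aD aU : ℤ → ℂ, IsOutgoingWith M₀ κ aL aR aD aU u ∧
        ∀ n : ℤ, M₀ < |n| → aL n = 0 ∧ aR n = 0 ∧ aD n = 0 ∧ aU n = 0) ∧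
    (∀ u : Site → Chir → ℂ, IsPtSolution C κ u →
      (IsOutgoing M₀ κ u ↔ Memℓp (fun x : Site => (WithLp.toLp 2 ((Dmat θ x).mulVec (u x)) : V)) 2)) := by
  refine ⟨⟨?_, ?_⟩, ?_, fun u hu => ⟨hu.memℓp_of_isOutgoing hA1 hθ, hu.isOutgoing_of_memℓp hA1 hθ⟩⟩
  · rintro ⟨v, hv0, hveq⟩
    have hv := eq_toLp_Dmat_mulVec_inv_mulVec θ v
    have hu := (transWalkOp_eq_smul_iff_isPtSolution hS hMθ κ hv).mp hveq
    refine ⟨_, (ne_zero_iff_of_eq_Dmat_mulVec hv).mp hv0, hu.isOutgoing_of_memℓp hA1 hθ ?_, hu⟩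
    simpa only [← hv] using lp.memℓp v
  · rintro ⟨u, hu0, hout, hu⟩
    have hv (x : Site) : (⟨_, hu.memℓp_of_isOutgoing hA1 hθ hout⟩ : H) x =
        WithLp.toLp 2 (Dmat θ x *ᵥ u x) := rfl
    exact ⟨_, (ne_zero_iff_of_eq_Dmat_mulVec hv).mpr hu0,
      (transWalkOp_eq_smul_iff_isPtSolution hS hMθ κ hv).mpr hu⟩
  · rintro u hu ⟨aL, aR, aD, aU, hout⟩
    have ha (i : Chir) (n : ℤ) (hn : M₀ < |n|) := hu.coeff_eq_zero_of_isOutgoingWith hA1 hout i hn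
    exact ⟨aL, aR, aD, aU, hout, fun n hn => ⟨ha 0 n hn, ha 1 n hn, ha 2 n hn, ha 3 n hn⟩⟩

/-- `e^{−iκ}` is an eigenvalue of `U(θ)` iff there is a nonzero outgoing pointwise
solution of `Uu = e^{−iκ}u`; the sequences `a_j` are supported in `[−M₀, M₀]`; and a pointwise
solution is outgoing iff `x ↦ D_x(θ)u(x)` belongs to `H`. -/
theorem resonance_iff_outgoing_solution
    (M₀ : ℤ) (C : Site → Matrix Chir Chir ℂ)
    (hC : IsUnitaryCoin C) (hA1 : SatisfiesA1 C M₀)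
    (S : H →L[ℂ] H) (hS : IsShiftOp S)
    (κ θ : ℂ) (hκ : κ.im < 0) (hθ : θ.im < κ.im)
    (Mθ : H →L[ℂ] H) (hMθ : IsCoinOp Mθ (transCoin θ C)) :
    ((∃ v : H, v ≠ 0 ∧ (transWalkOp θ S Mθ) v = Complex.exp (-(Complex.I * κ)) • v) ↔
      (∃ u : Site → Chir → ℂ, u ≠ 0 ∧ IsOutgoing M₀ κ u ∧ IsPtSolution C κ u)) ∧
    (∀ u : Site → Chir → ℂ, IsPtSolution C κ u → IsOutgoing M₀ κ u →
      ∃ aL aR aD aU : ℤ → ℂ, IsOutgoingWith M₀ κ aL aR aD aU u ∧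
        ∀ n : ℤ, M₀ < |n| → aL n = 0 ∧ aR n = 0 ∧ aD n = 0 ∧ aU n = 0) ∧
    (∀ u : Site → Chir → ℂ, IsPtSolution C κ u →
      (IsOutgoing M₀ κ u ↔ Memℓp (fun x : Site => (WithLp.toLp 2 ((Dmat θ x).mulVec (u x)) : V)) 2)) :=
  resonance_iff_outgoing_solution_general M₀ C hA1 S hS κ θ hθ Mθ hMθ

end QWPaper
end
end

section
/- Let U_el be an elastic quantum walk satisfying (A-1), and let (y,j) ∈ ℤ² × {←,→,↓,↑}. Then: (1) the trajectory Φ(·,y,j) is closed if and only if it is bounded; (2) |q(t,y,j)| → ∞ as t → +∞ if and only if |q(t,y,j)| → ∞ as t → −∞. -/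
noncomputable section

namespace QWPaper

open Complex

/-! Since `Uel ^ (s + t) = Uel ^ t * Uel ^ s`, the trajectories are the orbits of a `ℤ`-action on
the set of states `ℤ² × {←,→,↓,↑}`. A closed trajectory is therefore periodic and visits finitely
many states, while a trajectory visiting finitely many states must repeat one; and a set of states
is finite exactly when its sites are bounded. A trajectory that is not closed visits every state
at most once, so it leaves every bounded set both as `t → +∞` and as `t → -∞`. -/

open Filter Set Function

lemma deltaState_apply (y : Site) (j : Chir) (x : Site) (i : Chir) :
    deltaState y j x i = if x = y ∧ i = j then 1 else 0 := by
  unfold deltaState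
  rcases eq_or_ne x y with rfl | h
  · simp
  · simp [h]

lemma eq_of_smul_deltaState_eq {a b : ℂ} {x x' : Site} {i i' : Chir} (ha : a ≠ 0)
    (h : a • deltaState x i = b • deltaState x' i') : (x, i) = (x', i') := by
  have hxi := congr($h x i)
  simp only [lp.coeFn_smul, Pi.smul_apply, PiLp.smul_apply, smul_eq_mul, deltaState_apply,
    true_and] at hxi
  by_contra hne
  simp only [Prod.mk.injEq] at hne
  simp [hne, ha] at hxi

/-- `trajectory q p t (y, j)` is the paper's `Φ(t, y, j)`. -/
def trajectory (q : ℤ → Site → Chir → Site) (p : ℤ → Site → Chir → Chir) (t : ℤ)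
    (w : Site × Chir) : Site × Chir :=
  (q t w.1 w.2, p t w.1 w.2)

namespace IsTrajectory

variable {U : unitary (H →L[ℂ] H)} {q : ℤ → Site → Chir → Site} {p : ℤ → Site → Chir → Chir}

lemma trajectory_add (h : IsTrajectory U q p) (s t : ℤ) (w : Site × Chir) :
    trajectory q p (s + t) w = trajectory q p t (trajectory q p s w) := by
  obtain ⟨c, -, hc⟩ := h.2 s w.1 w.2
  obtain ⟨c', -, hc'⟩ := h.2 t (q s w.1 w.2) (p s w.1 w.2)
  obtain ⟨c'', hc''_norm, hc''⟩ := h.2 (s + t) w.1 w.2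
  have hc''_ne : c'' ≠ 0 := by rintro rfl; simp at hc''_norm
  refine eq_of_smul_deltaState_eq (b := c * c') hc''_ne ?_
  rw [← hc'', add_comm, zpow_add, Submonoid.coe_mul, mul_apply_eq_comp, hc, map_smul, hc',
    smul_smul]
  rfl

lemma periodic_trajectory (h : IsTrajectory U q p) {t₁ t₂ : ℤ} {w : Site × Chir}
    (hw : trajectory q p t₁ w = trajectory q p t₂ w) :
    Periodic (fun t => trajectory q p t w) (t₂ - t₁) := by
  intro t
  calc trajectory q p (t + (t₂ - t₁)) w = trajectory q p (t - t₁) (trajectory q p t₂ w) := by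
        rw [← h.trajectory_add]; ring_nf
    _ = trajectory q p t w := by rw [← hw, ← h.trajectory_add]; ring_nf

lemma finite_range_trajectory_iff (h : IsTrajectory U q p) (w : Site × Chir) :
    (range fun t => trajectory q p t w).Finite ↔
      ∃ t₁ t₂, t₁ < t₂ ∧ trajectory q p t₁ w = trajectory q p t₂ w := by
  refine ⟨fun hfin => hfin.exists_lt_map_eq_of_forall_mem (mem_range_self ·), ?_⟩
  rintro ⟨t₁, t₂, hlt, hw⟩
  rw [← (h.periodic_trajectory hw).image_Ioc (sub_pos.2 hlt) 0]
  exact (finite_Ioc _ _).image _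

end IsTrajectory

lemma finite_setOf_znorm_le (ρ : ℝ) : {x : Site | znorm x ≤ ρ}.Finite := by
  refine ((finite_Icc (-⌈ρ⌉) ⌈ρ⌉).prod (finite_Icc (-⌈ρ⌉) ⌈ρ⌉)).subset fun x hx => ?_
  have hcoord : ∀ n : ℤ, (n : ℝ) ^ 2 ≤ (x.1 : ℝ) ^ 2 + (x.2 : ℝ) ^ 2 → n ∈ Icc (-⌈ρ⌉) ⌈ρ⌉ :=
    fun n hn => by
      have := ((Real.abs_le_sqrt hn).trans hx).trans (Int.le_ceil ρ)
      rw [mem_Icc, ← abs_le]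
      exact_mod_cast this
  exact ⟨hcoord _ (by nlinarith), hcoord _ (by nlinarith)⟩

lemma finite_setOf_znorm_fst_le (ρ : ℝ) : {w : Site × Chir | znorm w.1 ≤ ρ}.Finite :=
  ((finite_setOf_znorm_le ρ).prod finite_univ).subset fun _ hw => ⟨hw, trivial⟩

lemma finite_range_iff_exists_znorm_le {ι : Type*} (f : ι → Site × Chir) :
    (range f).Finite ↔ ∃ ρ : ℝ, ∀ i, znorm (f i).1 ≤ ρ := by
  constructor
  · intro hfin
    obtain ⟨ρ, hρ⟩ := (hfin.image fun w => znorm w.1).bddAbove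
    exact ⟨ρ, fun i => hρ ⟨f i, mem_range_self i, rfl⟩⟩
  · rintro ⟨ρ, hρ⟩
    exact (finite_setOf_znorm_fst_le ρ).subset (range_subset_iff.2 hρ)

lemma tendsto_znorm_fst_cofinite :
    Tendsto (fun w : Site × Chir => znorm w.1) cofinite atTop :=
  tendsto_atTop.2 fun ρ => eventually_cofinite.2 <|
    (finite_setOf_znorm_fst_le ρ).subset fun _ hw => (not_le.1 hw).le

lemma tendsto_znorm_of_injective {ι : Type*} {l : Filter ι} (hl : l ≤ cofinite)
    {f : ι → Site × Chir} (hf : Injective f) : Tendsto (fun i => znorm (f i).1) l atTop :=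
  tendsto_znorm_fst_cofinite.comp (hf.tendsto_cofinite.mono_left hl)

theorem trajectory_closed_iff_bounded_general
    (Uel : unitary (H →L[ℂ] H))
    (q : ℤ → Site → Chir → Site) (p : ℤ → Site → Chir → Chir)
    (htraj : IsTrajectory Uel q p) (y : Site) (j : Chir) :
    ((∃ t₁ t₂ : ℤ, t₁ < t₂ ∧ q t₁ y j = q t₂ y j ∧ p t₁ y j = p t₂ y j) ↔
      (∃ ρ : ℝ, ∀ t : ℤ, znorm (q t y j) ≤ ρ)) ∧
    (Filter.Tendsto (fun t : ℤ => znorm (q t y j)) Filter.atTop Filter.atTop ↔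
      Filter.Tendsto (fun t : ℤ => znorm (q t y j)) Filter.atBot Filter.atTop) := by
  set Φ : ℤ → Site × Chir := fun t => trajectory q p t (y, j)
  have closed_iff : (∃ t₁ t₂ : ℤ, t₁ < t₂ ∧ q t₁ y j = q t₂ y j ∧ p t₁ y j = p t₂ y j) ↔
      ∃ t₁ t₂, t₁ < t₂ ∧ Φ t₁ = Φ t₂ := by
    simp only [Φ, trajectory, Prod.mk.injEq]
  have closed_iff_bounded := closed_iff.trans <|
    (htraj.finite_range_trajectory_iff (y, j)).symm.trans (finite_range_iff_exists_znorm_le Φ)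
  refine ⟨closed_iff_bounded, ?_⟩
  by_cases hclosed : ∃ t₁ t₂ : ℤ, t₁ < t₂ ∧ q t₁ y j = q t₂ y j ∧ p t₁ y j = p t₂ y j
  · obtain ⟨ρ, hρ⟩ := closed_iff_bounded.1 hclosed
    have hbdd : BddAbove (range fun t => znorm (q t y j)) := ⟨ρ, forall_mem_range.2 hρ⟩
    exact iff_of_false (not_bddAbove_of_tendsto_atTop · hbdd)
      (not_bddAbove_of_tendsto_atTop · hbdd)
  · have hinj : Injective Φ :=
      Injective.of_lt_imp_ne fun s t hlt hst => hclosed (closed_iff.2 ⟨s, t, hlt, hst⟩)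
    have hfuture := tendsto_znorm_of_injective (l := atTop) atTop_le_cofinite hinj
    have hpast := tendsto_znorm_of_injective (l := atBot) atBot_le_cofinite hinj
    exact iff_of_true hfuture hpast

/-- a trajectory of an elastic quantum walk is closed iff it is bounded, and it
escapes to infinity in the future iff it escapes to infinity in the past. -/
theorem trajectory_closed_iff_bounded
    (M₀ : ℤ) (hM₀ : 1 ≤ M₀)
    (σ : Site → Equiv.Perm Chir) (α : Site → Chir → ℝ)
    (hA1 : ∀ x, x ∉ innerDom M₀ → elasticCoin σ α x = 1)
    (S Cop : H →L[ℂ] H) (hS : IsShiftOp S) (hCop : IsCoinOp Cop (elasticCoin σ α))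
    (Uel : unitary (H →L[ℂ] H)) (hUel : (Uel : H →L[ℂ] H) = S.comp Cop)
    (q : ℤ → Site → Chir → Site) (p : ℤ → Site → Chir → Chir)
    (htraj : IsTrajectory Uel q p) (y : Site) (j : Chir) :
    ((∃ t₁ t₂ : ℤ, t₁ < t₂ ∧ q t₁ y j = q t₂ y j ∧ p t₁ y j = p t₂ y j) ↔
      (∃ ρ : ℝ, ∀ t : ℤ, znorm (q t y j) ≤ ρ)) ∧
    (Filter.Tendsto (fun t : ℤ => znorm (q t y j)) Filter.atTop Filter.atTop ↔
      Filter.Tendsto (fun t : ℤ => znorm (q t y j)) Filter.atBot Filter.atTop) :=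
  trajectory_closed_iff_bounded_general Uel q p htraj y j

end QWPaper
end
end
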